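/- arXiv:1712.04506 — 5 statements merged into one kernel-verified Lean document; each statement's English description precedes it below -/
import Mathlib

section
/- A q-cycle σ ∈ 𝒞_q satisfies des(σ) = 1 if and only if σ is a rotation cycle, i.e., σ = ρ^p for some integer 1 ≤ p < q relatively prime to q. -/
open scoped Classical

noncomputable section

/-- The representative of `i : ZMod q` in `{1, …, q}`. -/
def rep (q : ℕ) [NeZero q] (i : ZMod q) : ℕ :=
  if i = 0 then q else i.val

/-- The rotation `ρ : i ↦ i + 1 (mod q)` of `ZMod q`. -/
def rotPerm (q : ℕ) : Equiv.Perm (ZMod q) :=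
  Equiv.addRight 1

/-- The descent number `des σ`: the number of `i ∈ ZMod q` with `σ(i) > σ(i+1)`,
values compared via their representatives in `{1, …, q}`. -/
def desNum (q : ℕ) [NeZero q] (σ : Equiv.Perm (ZMod q)) : ℕ :=
  (Finset.univ.filter fun i : ZMod q => rep q (σ (i + 1)) < rep q (σ i)).card

/-- `σ` is a `q`-cycle, i.e. it acts transitively on `ZMod q`. -/
def IsQCycle (q : ℕ) (σ : Equiv.Perm (ZMod q)) : Prop :=
  ∀ i j : ZMod q, ∃ n : ℕ, (σ ^ n) i = j

/-- The transition matrix of `σ`: the `(i,j)` entry is `1` if `j` lies in the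
cyclic interval `[σ(i), σ(i+1))` of `ZMod q` and `0` otherwise. -/
def transMatrix (q : ℕ) [NeZero q] (σ : Equiv.Perm (ZMod q)) :
    Matrix (ZMod q) (ZMod q) ℝ :=
  Matrix.of fun i j => if (j - σ i).val < (σ (i + 1) - σ i).val then (1 : ℝ) else 0

/-- A probability vector: non-negative components summing to `1`. -/
def IsProbVec (q : ℕ) [NeZero q] (v : ZMod q → ℝ) : Prop :=
  (∀ i, 0 ≤ v i) ∧ ∑ i, v i = 1

/-- The symmetry order of `σ`: the order of the stabilizer of `σ` in the rotation
group `⟨ρ⟩` acting by conjugation. -/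
def symOrder (q : ℕ) [NeZero q] (σ : Equiv.Perm (ZMod q)) : ℕ :=
  ((Finset.range q).filter fun j => rotPerm q ^ j * σ * (rotPerm q ^ j)⁻¹ = σ).card

/-- `F : ℝ → ℝ` is a lift of a degree `k` covering map of `ℝ/ℤ`:
a homeomorphism of `ℝ` with `F (t+1) = F t + k`. -/
def IsDegreeLift (k : ℕ) (F : ℝ → ℝ) : Prop :=
  Continuous F ∧ StrictMono F ∧ ∀ t, F (t + 1) = F t + k

/-- The fixed point of the circle map corresponding to `u` (a point with
`F u - u ∈ ℤ`) is topologically repelling: `t ↦ F t - t` is strictly increasing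
in a neighborhood of `u`. -/
def TopRepelling (F : ℝ → ℝ) (u : ℝ) : Prop :=
  ∃ ε > 0, StrictMonoOn (fun t => F t - t) (Set.Ioo (u - ε) (u + ε))

/-- `x : ZMod q → ℝ` is a period `q` orbit realizing `σ` for the circle map with
lift `F`: the points `x i` lie in `(0,1)` and are increasing with respect to the
representatives `{1, …, q}` (so that `0, x₁, …, x_q` are in positive cyclic
order), and on the circle `f(x i) = x (σ i)` for all `i`. -/
def IsRealization (q : ℕ) [NeZero q] (σ : Equiv.Perm (ZMod q))
    (F : ℝ → ℝ) (x : ZMod q → ℝ) : Prop :=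
  (∀ i, x i ∈ Set.Ioo (0 : ℝ) 1) ∧
  (∀ i j : ZMod q, rep q i < rep q j → x i < x j) ∧
  (∀ i, ∃ m : ℤ, F (x i) = x (σ i) + m)

/-- A realization of `σ` under the multiplication map `m_k : x ↦ kx (mod ℤ)`. -/
def MkRealization (q k : ℕ) [NeZero q] (σ : Equiv.Perm (ZMod q)) (x : ZMod q → ℝ) : Prop :=
  IsRealization q σ (fun t => (k : ℝ) * t) x

/-- The upper endpoint (as a real number) of the partition interval
`I i = [x i, x (i+1)]`; for `i = 0 ≡ q` the interval wraps around `0 ∈ ℝ/ℤ`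
and the endpoint is `x 1 + 1`. -/
def upperPt (q : ℕ) [NeZero q] (x : ZMod q → ℝ) (i : ZMod q) : ℝ :=
  if i = 0 then x 1 + 1 else x (i + 1)

/-- The `i`-th component of the fixed point distribution: the number of fixed
points of `m_k` (the points `j/(k-1) (mod ℤ)`) in the interior of the partition
interval `I i`. -/
def fixDist (q k : ℕ) [NeZero q] (x : ZMod q → ℝ) (i : ZMod q) : ℕ :=
  ((Finset.Icc 1 (2 * (k - 1))).filter fun j : ℕ =>
    x i < (j : ℝ) / ((k : ℝ) - 1) ∧ (j : ℝ) / ((k : ℝ) - 1) < upperPt q x i).card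

/-- The number of fixed points of `m_k` in the interval `(0, x 1)`. -/
def countFixBelow (q k : ℕ) [NeZero q] (x : ZMod q → ℝ) : ℕ :=
  ((Finset.range (k - 1)).filter fun j : ℕ =>
    0 < j ∧ (j : ℝ) / ((k : ℝ) - 1) < x 1).card

/-- The `m`-th component of the (cumulative) deployment vector: the number of
orbit points in `(0, m/(k-1))`. -/
def depCount (q k : ℕ) [NeZero q] (x : ZMod q → ℝ) (m : ℕ) : ℕ :=
  (Finset.univ.filter fun j : ZMod q => x j < (m : ℝ) / ((k : ℝ) - 1)).card

/-- The rank of a marked index `i` among the marked indices `i₁ < ⋯ < i_{d-1}`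
(ordered by their representatives in `{1, …, q}`). -/
def markRank (q : ℕ) [NeZero q] (σ : Equiv.Perm (ZMod q)) (i : ZMod q) : ℕ :=
  (Finset.univ.filter fun i' : ZMod q =>
    transMatrix q σ i' i' = 1 ∧ rep q i' ≤ rep q i).card

/-!
Write `σ i = τ i + 1`, so that `rep q (σ i) = (τ i).val + 1` and the descents of `σ` are the
steps `i ↦ i + 1` at which `val ∘ τ` decreases. The increments of `val ∘ τ` around the cycle sum
to `0`; a decreasing step drops by at most `q - 1`, so if it is the only one, each of the other
`q - 1` steps rises by exactly `1`. Hence `σ (i + 1) = σ i + 1` for all `i`, i.e. `σ = ρ ^ p`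
with `p = σ 0`, and transitivity of `ρ ^ p` makes `p` a unit modulo `q`.
-/

namespace ZMod

variable {q : ℕ} [NeZero q]

theorem apply_add_one_eq_apply_add_one_of_val_lt (f : ZMod q → ZMod q) (i₀ : ZMod q)
    (hf : ∀ i, i ≠ i₀ → (f i).val < (f (i + 1)).val) (i : ZMod q) :
    f (i + 1) = f i + 1 := by
  set d : ZMod q → ℤ := fun i => (f (i + 1)).val - (f i).val with hd
  have hsum : ∑ i, d i = 0 := by
    simp only [hd, Finset.sum_sub_distrib, sub_eq_zero]
    exact Fintype.sum_equiv (Equiv.addRight 1) _ _ fun _ => rfl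
  have hd₀ : 1 - (q : ℤ) ≤ d i₀ := by
    have := val_lt (f i₀)
    simp only [hd]
    omega
  have hstep : ∀ i ∈ Finset.univ.erase i₀, 0 ≤ d i - 1 := fun i hi => by
    have := hf i (Finset.ne_of_mem_erase hi)
    simp only [hd]
    omega
  have hsplit : ∑ i ∈ Finset.univ.erase i₀, (d i - 1) + (d i₀ - (1 - q)) = 0 := by
    rw [Finset.sum_sub_distrib, Finset.sum_const, Finset.card_erase_of_mem (Finset.mem_univ _),
      Finset.card_univ, card, ← hsum, ← Finset.add_sum_erase _ d (Finset.mem_univ i₀)]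
    have : 1 ≤ q := NeZero.one_le
    rw [nsmul_one]
    omega
  obtain ⟨hrest, hexc⟩ :=
    (add_eq_zero_iff_of_nonneg (Finset.sum_nonneg hstep) (by linarith)).1 hsplit
  have hdi : ((d i : ℤ) : ZMod q) = 1 := by
    by_cases hi : i = i₀
    · rw [hi, show d i₀ = 1 - q by linarith]
      simp
    · rw [show d i = 1 by
        linarith [(Finset.sum_eq_zero_iff_of_nonneg hstep).1 hrest i (by simp [hi])]]
      simp
  have hcast : ((d i : ℤ) : ZMod q) = f (i + 1) - f i := by
    simp [hd]
  linear_combination hdi - hcast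

theorem apply_eq_add_apply_zero (f : ZMod q → ZMod q) (hf : ∀ i, f (i + 1) = f i + 1)
    (i : ZMod q) : f i = i + f 0 := by
  rw [← natCast_zmod_val i]
  induction i.val with
  | zero => simp
  | succ n ih => rw [Nat.cast_succ, hf, ih]; ring

end ZMod

theorem rotPerm_pow_apply {q : ℕ} (p : ℕ) (i : ZMod q) : (rotPerm q ^ p) i = i + p := by
  induction p with
  | zero => simp
  | succ n ih =>
    rw [pow_succ', Equiv.Perm.mul_apply, ih, Nat.cast_succ, ← add_assoc]
    rfl

section

variable {q : ℕ} [NeZero q]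

theorem rep_natCast {m : ℕ} (h₁ : 1 ≤ m) (h₂ : m ≤ q) : rep q m = m := by
  rcases h₂.lt_or_eq with hlt | rfl
  · have hval : (m : ZMod q).val = m := ZMod.val_cast_of_lt hlt
    rw [rep, if_neg fun h => by rw [h, ZMod.val_zero] at hval; omega, hval]
  · simp [rep]

theorem rep_add_one (i : ZMod q) : rep q (i + 1) = i.val + 1 := by
  rw [← rep_natCast (Nat.le_add_left 1 _) (ZMod.val_lt i), Nat.cast_succ, ZMod.natCast_zmod_val]

theorem rep_eq_val_sub_one_add_one (i : ZMod q) : rep q i = (i - 1).val + 1 := by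
  rw [← rep_add_one, sub_add_cancel]

theorem rep_lt_rep_iff (i j : ZMod q) : rep q i < rep q j ↔ (i - 1).val < (j - 1).val := by
  simp only [rep_eq_val_sub_one_add_one, Nat.add_lt_add_iff_right]

theorem rep_add_one_lt_rep_iff (hq : 2 ≤ q) (i : ZMod q) : rep q (i + 1) < rep q i ↔ i = 0 := by
  rw [rep_add_one, rep]
  split_ifs with hi
  · simp only [hi, ZMod.val_zero, iff_true]
    omega
  · simp only [hi, iff_false]
    omega

theorem desNum_eq_one_iff_forall_apply_add_one (hq : 2 ≤ q) (σ : Equiv.Perm (ZMod q)) :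
    desNum q σ = 1 ↔ ∀ i, σ (i + 1) = σ i + 1 := by
  constructor
  · intro h
    obtain ⟨i₀, hi₀⟩ := Finset.card_eq_one.1 h
    have hone : (1 : ZMod q) ≠ 0 := by
      rw [Ne, ZMod.one_eq_zero_iff]
      omega
    have hascent : ∀ i, i ≠ i₀ → (σ i - 1).val < (σ (i + 1) - 1).val := by
      intro i hi
      have hnot : ¬ rep q (σ (i + 1)) < rep q (σ i) := fun hlt =>
        hi (Finset.mem_singleton.1 (hi₀ ▸ Finset.mem_filter.2 ⟨Finset.mem_univ i, hlt⟩))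
      rw [rep_lt_rep_iff, not_lt] at hnot
      refine hnot.lt_of_ne ((ZMod.val_injective q).ne ?_)
      simpa using σ.injective.ne (add_ne_left.2 hone : i + 1 ≠ i).symm
    intro i
    have := ZMod.apply_add_one_eq_apply_add_one_of_val_lt (fun i => σ i - 1) i₀ hascent i
    linear_combination this
  · intro h
    refine Finset.card_eq_one.2 ⟨σ.symm 0, ?_⟩
    ext i
    simp [h, rep_add_one_lt_rep_iff hq, Equiv.eq_symm_apply]

theorem Nat.Coprime.of_isQCycle_rotPerm_pow {p : ℕ} (h : IsQCycle q (rotPerm q ^ p)) :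
    Nat.Coprime p q := by
  obtain ⟨n, hn⟩ := h 0 1
  rw [← pow_mul, rotPerm_pow_apply, zero_add, Nat.cast_mul] at hn
  exact (ZMod.isUnit_iff_coprime p q).1 (.of_mul_eq_one _ hn)

end

/-- A `q`-cycle `σ` has descent number `1` iff it is a rotation cycle,
i.e. `σ = ρ^p` for some `1 ≤ p < q` relatively prime to `q`. -/
theorem descent_one_iff_rotation_cycle (q : ℕ) [NeZero q] (hq : 2 ≤ q)
    (σ : Equiv.Perm (ZMod q)) (hσ : IsQCycle q σ) :
    desNum q σ = 1 ↔ ∃ p : ℕ, 1 ≤ p ∧ p < q ∧ Nat.Coprime p q ∧ σ = rotPerm q ^ p := by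
  rw [desNum_eq_one_iff_forall_apply_add_one hq]
  constructor
  · intro h
    have hσp : σ = rotPerm q ^ (σ 0).val := by
      ext i
      rw [ZMod.apply_eq_add_apply_zero σ h i, rotPerm_pow_apply, ZMod.natCast_zmod_val]
    have hcop : Nat.Coprime (σ 0).val q := .of_isQCycle_rotPerm_pow (hσp ▸ hσ)
    refine ⟨(σ 0).val, Nat.pos_of_ne_zero fun h0 => ?_, ZMod.val_lt _, hcop, hσp⟩
    rw [h0, Nat.coprime_zero_left] at hcop
    omega
  · rintro ⟨p, -, -, -, rfl⟩ i
    simp only [rotPerm_pow_apply]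
    ring
end
end

section
/- Let f, g: ℝ/ℤ → ℝ/ℤ be covering maps, let [a,b] be an interval on the circle with f(a) = g(a) and f(b) = g(b), and suppose g is a p-winding of f on [a,b] for some integer p ≥ 0. If all fixed points of f and of g in [a,b] are topologically repelling, then the number of fixed points of g in [a,b] exceeds the number of fixed points of f in [a,b] by exactly p. -/
/-!
Fixed points of the circle map in `[a,b]` are the points where `φ t = F t - t` is an integer.
Repulsion says `φ` can cross an integer level only upwards, so on `[a,b]` it meets each integer
of `[φ a, φ b]` exactly once and no other integer: there are `⌊φ b⌋ + 1 - ⌈φ a⌉` fixed points.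
Passing from `F` to a `p`-winding `G` keeps `φ a` and raises `φ b` by `p`.
-/

open scoped Classical

noncomputable section

open Set

def StrictMonoNearLevel (φ : ℝ → ℝ) (y : ℝ) (s : Set ℝ) : Prop :=
  ∀ u ∈ s, φ u = y → ∃ ε > 0, StrictMonoOn φ (Ioo (u - ε) (u + ε))

namespace StrictMonoNearLevel

variable {φ : ℝ → ℝ} {y a b : ℝ}

theorem mono {s t : Set ℝ} (h : StrictMonoNearLevel φ y s) (hts : t ⊆ s) :
    StrictMonoNearLevel φ y t :=
  fun u hu => h u (hts hu)

theorem lt_of_lt (hφ : ContinuousOn φ (Icc a b)) (h : StrictMonoNearLevel φ y (Icc a b))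
    (hab : a ≤ b) (ha : y < φ a) : y < φ b := by
  by_contra! hb
  -- `u₀` is the first point of `[a,b]` where `φ` drops to `y`
  set T := Icc a b ∩ φ ⁻¹' Iic y
  have hTbdd : BddBelow T := ⟨a, fun t ht => ht.1.1⟩
  have hu₀ : sInf T ∈ T :=
    (hφ.preimage_isClosed_of_isClosed isClosed_Icc isClosed_Iic).csInf_mem
      ⟨b, ⟨hab, le_rfl⟩, hb⟩ hTbdd
  set u₀ := sInf T
  have above : ∀ t ∈ Ico a u₀, y < φ t := fun t ht =>
    not_le.1 fun hty =>
      (csInf_le hTbdd ⟨⟨ht.1, ht.2.le.trans hu₀.1.2⟩, hty⟩).not_gt ht.2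
  have hau₀ : a < u₀ := hu₀.1.1.lt_of_ne fun he => (he ▸ ha).not_ge hu₀.2
  have hlevel : φ u₀ = y := by
    obtain ⟨s, hs, hsy⟩ := intermediate_value_Icc' hau₀.le (hφ.mono (Icc_subset_Icc_right hu₀.1.2))
      ⟨hu₀.2, ha.le⟩
    obtain rfl : s = u₀ := hs.2.antisymm (not_lt.1 fun hsu => (above s ⟨hs.1, hsu⟩).ne' hsy)
    exact hsy
  obtain ⟨ε, hε, hmono⟩ := h u₀ hu₀.1 hlevel
  set t := max a (u₀ - ε / 2)
  have htu₀ : t < u₀ := max_lt hau₀ (by linarith)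
  have hφt : φ t < y :=
    hlevel ▸ hmono ⟨(by linarith : u₀ - ε < u₀ - ε / 2).trans_le (le_max_right _ _), by linarith⟩
      ⟨by linarith, by linarith⟩ htu₀
  exact (above t ⟨le_max_left _ _, htu₀⟩).not_gt hφt

theorem lt_of_le (hφ : ContinuousOn φ (Icc a b)) (h : StrictMonoNearLevel φ y (Icc a b))
    (hab : a < b) (ha : y ≤ φ a) : y < φ b := by
  rcases ha.lt_or_eq with ha | ha
  · exact h.lt_of_lt hφ hab.le ha
  obtain ⟨ε, hε, hmono⟩ := h a ⟨le_rfl, hab.le⟩ ha.symm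
  set t := min b (a + ε / 2)
  have hat : a < t := lt_min hab (by linarith)
  have hyt : y < φ t :=
    ha ▸ hmono ⟨by linarith, by linarith⟩
      ⟨by linarith, (min_le_right _ _).trans_lt (by linarith)⟩ hat
  have hsub : Icc t b ⊆ Icc a b := Icc_subset_Icc_left hat.le
  exact (h.mono hsub).lt_of_lt (hφ.mono hsub) (min_le_left _ _) hyt

theorem subsingleton (hφ : ContinuousOn φ (Icc a b)) (h : StrictMonoNearLevel φ y (Icc a b)) :
    {u ∈ Icc a b | φ u = y}.Subsingleton := by
  suffices ∀ u ∈ {u ∈ Icc a b | φ u = y}, ∀ v ∈ {u ∈ Icc a b | φ u = y}, ¬u < v by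
    intro u hu v hv
    by_contra hne
    exact (Ne.lt_or_gt hne).elim (this u hu v hv) (this v hv u hu)
  rintro u ⟨hu, hφu⟩ v ⟨hv, hφv⟩ huv
  have hsub : Icc u v ⊆ Icc a b := Icc_subset_Icc hu.1 hv.2
  exact (hφv ▸ (h.mono hsub).lt_of_le (hφ.mono hsub) huv hφu.ge).false

theorem mem_Icc (hφ : ContinuousOn φ (Icc a b)) (h : StrictMonoNearLevel φ y (Icc a b))
    {u : ℝ} (hu : u ∈ Icc a b) (hφu : φ u = y) : y ∈ Icc (φ a) (φ b) := by
  constructor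
  · by_contra! ha
    have hsub : Icc a u ⊆ Icc a b := Icc_subset_Icc_right hu.2
    exact (hφu ▸ (h.mono hsub).lt_of_lt (hφ.mono hsub) hu.1 ha).false
  · rcases hu.2.lt_or_eq with hub | rfl
    · have hsub : Icc u b ⊆ Icc a b := Icc_subset_Icc_left hu.1
      exact ((h.mono hsub).lt_of_le (hφ.mono hsub) hub hφu.ge).le
    · exact hφu.ge

end StrictMonoNearLevel

section IntegerLevels

variable {φ : ℝ → ℝ} {a b : ℝ}

theorem ceil_le_floor_add_one_of_strictMonoNearLevel (hφ : ContinuousOn φ (Icc a b))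
    (hab : a ≤ b) (h : ∀ m : ℤ, StrictMonoNearLevel φ m (Icc a b)) :
    ⌈φ a⌉ ≤ ⌊φ b⌋ + 1 := by
  by_contra! hlt
  have hm := (h (⌊φ b⌋ + 1)).lt_of_lt hφ hab (Int.lt_ceil.1 hlt)
  push_cast at hm
  exact (Int.lt_floor_add_one (φ b)).not_gt hm

theorem bijOn_floor_intLevels (hφ : ContinuousOn φ (Icc a b)) (hab : a ≤ b)
    (h : ∀ m : ℤ, StrictMonoNearLevel φ m (Icc a b)) :
    BijOn (fun u => ⌊φ u⌋) {u ∈ Icc a b | ∃ m : ℤ, φ u = m} (Icc ⌈φ a⌉ ⌊φ b⌋) := by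
  refine ⟨?_, ?_, ?_⟩
  · rintro u ⟨hu, m, hm⟩
    obtain ⟨ha, hb⟩ := (h m).mem_Icc hφ hu hm
    simp only [hm, Int.floor_intCast]
    exact ⟨Int.ceil_le.2 ha, Int.le_floor.2 hb⟩
  · rintro u ⟨hu, m, hm⟩ v ⟨hv, n, hn⟩ (huv : ⌊φ u⌋ = ⌊φ v⌋)
    rw [hm, hn, Int.floor_intCast, Int.floor_intCast] at huv
    exact (h m).subsingleton hφ ⟨hu, hm⟩ ⟨hv, huv ▸ hn⟩
  · rintro m ⟨ha, hb⟩
    obtain ⟨u, hu, hum⟩ := intermediate_value_Icc hab hφ ⟨Int.ceil_le.1 ha, Int.le_floor.1 hb⟩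
    exact ⟨u, ⟨hu, m, hum⟩, by simp only [hum, Int.floor_intCast]⟩

theorem ncard_intLevels (hφ : ContinuousOn φ (Icc a b)) (hab : a ≤ b)
    (h : ∀ m : ℤ, StrictMonoNearLevel φ m (Icc a b)) :
    {u ∈ Icc a b | ∃ m : ℤ, φ u = m}.Finite ∧
      ({u ∈ Icc a b | ∃ m : ℤ, φ u = m}.ncard : ℤ) = ⌊φ b⌋ + 1 - ⌈φ a⌉ := by
  have hbij := bijOn_floor_intLevels hφ hab h
  refine ⟨Finite.of_finite_image (hbij.image_eq ▸ finite_Icc _ _) hbij.injOn, ?_⟩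
  rw [← hbij.injOn.ncard_image, hbij.image_eq, ← Finset.coe_Icc,
    ncard_coe_finset, Int.card_Icc,
    Int.toNat_of_nonneg (by linarith [ceil_le_floor_add_one_of_strictMonoNearLevel hφ hab h])]

end IntegerLevels

theorem winding_fixed_point_count_general (kf kg : ℕ)
    (F G : ℝ → ℝ) (hF : IsDegreeLift kf F) (hG : IsDegreeLift kg G)
    (a b : ℝ) (hab : a < b)
    (p : ℕ) (hGa : G a = F a) (hGb : G b = F b + p)
    (hrepF : ∀ u ∈ Set.Icc a b, (∃ m : ℤ, F u - u = m) → TopRepelling F u)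
    (hrepG : ∀ u ∈ Set.Icc a b, (∃ m : ℤ, G u - u = m) → TopRepelling G u) :
    {u ∈ Set.Icc a b | ∃ m : ℤ, F u - u = m}.Finite ∧
    {u ∈ Set.Icc a b | ∃ m : ℤ, G u - u = m}.Finite ∧
    {u ∈ Set.Icc a b | ∃ m : ℤ, G u - u = m}.ncard
      = {u ∈ Set.Icc a b | ∃ m : ℤ, F u - u = m}.ncard + p := by
  obtain ⟨hFfin, hFcard⟩ := ncard_intLevels (φ := fun t => F t - t)
    (hF.1.sub continuous_id).continuousOn hab.le fun m u hu hm => hrepF u hu ⟨m, hm⟩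
  obtain ⟨hGfin, hGcard⟩ := ncard_intLevels (φ := fun t => G t - t)
    (hG.1.sub continuous_id).continuousOn hab.le fun m u hu hm => hrepG u hu ⟨m, hm⟩
  have ha : G a - a = F a - a := by rw [hGa]
  have hb : G b - b = F b - b + p := by rw [hGb]; ring
  refine ⟨hFfin, hGfin, ?_⟩
  have hcard : ({u ∈ Icc a b | ∃ m : ℤ, G u - u = m}.ncard : ℤ)
      = {u ∈ Icc a b | ∃ m : ℤ, F u - u = m}.ncard + p := by
    rw [hFcard, hGcard, ha, hb, Int.floor_add_natCast]
    ring
  exact_mod_cast hcard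

/-- If `g` is a `p`-winding of `f` on `[a,b]` (expressed via lifts `F`, `G` with
`G a = F a` and `G b = F b + p`, where `a < b < a + 1` are representatives of the
endpoints) and all fixed points of `f` and `g` in `[a,b]` are topologically
repelling, then `g` has exactly `p` more fixed points than `f` in `[a,b]`. -/
theorem winding_fixed_point_count (kf kg : ℕ) (hkf : 1 ≤ kf) (hkg : 1 ≤ kg)
    (F G : ℝ → ℝ) (hF : IsDegreeLift kf F) (hG : IsDegreeLift kg G)
    (a b : ℝ) (hab : a < b) (hb : b < a + 1)
    (p : ℕ) (hGa : G a = F a) (hGb : G b = F b + p)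
    (hrepF : ∀ u ∈ Set.Icc a b, (∃ m : ℤ, F u - u = m) → TopRepelling F u)
    (hrepG : ∀ u ∈ Set.Icc a b, (∃ m : ℤ, G u - u = m) → TopRepelling G u) :
    {u ∈ Set.Icc a b | ∃ m : ℤ, F u - u = m}.Finite ∧
    {u ∈ Set.Icc a b | ∃ m : ℤ, G u - u = m}.Finite ∧
    {u ∈ Set.Icc a b | ∃ m : ℤ, G u - u = m}.ncard
      = {u ∈ Set.Icc a b | ∃ m : ℤ, F u - u = m}.ncard + p :=
  winding_fixed_point_count_general kf kg F G hF hG a b hab p hGa hGb hrepF hrepG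
end
end

section
/- Let σ ∈ 𝒞_q be a q-cycle with des(σ) = d and let A be its transition matrix. Then the main diagonal of A contains exactly d − 1 entries equal to 1 (and the rest equal to 0). -/
open scoped Classical

noncomputable section

section aux
variable (q : ℕ) [NeZero q]
lemma rep_pos (i : ZMod q) : 1 ≤ rep q i := by
  unfold rep; split_ifs with h
  · exact Nat.one_le_iff_ne_zero.mpr (NeZero.ne q)
  · exact Nat.pos_of_ne_zero (fun hv => h ((ZMod.val_eq_zero i).mp hv))
lemma rep_le (i : ZMod q) : rep q i ≤ q := by
  unfold rep; split_ifs with h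
  · exact le_rfl
  · exact (ZMod.val_lt i).le
lemma rep_cast (i : ZMod q) : ((rep q i : ℕ) : ZMod q) = i := by
  unfold rep; split_ifs with h
  · simp [h]
  · exact ZMod.natCast_zmod_val i
lemma rep_inj {a b : ZMod q} (h : rep q a = rep q b) : a = b := by
  have := congrArg (fun n : ℕ => (n : ZMod q)) h
  simpa [rep_cast] using this
lemma val_sub' (a b : ZMod q) :
    ((b - a).val : ℤ) = (rep q b : ℤ) - rep q a + if rep q b < rep q a then (q : ℤ) else 0 := by
  set R : ℤ := (rep q b : ℤ) - rep q a + if rep q b < rep q a then (q : ℤ) else 0 with hR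
  have hb1 := rep_pos q a; have hb2 := rep_le q a
  have hb3 := rep_pos q b; have hb4 := rep_le q b
  have h0 : 0 ≤ R := by rw [hR]; split_ifs with h <;> omega
  have h1 : R < q := by rw [hR]; split_ifs with h <;> omega
  have h2 : ((R : ℤ) : ZMod q) = b - a := by
    rw [hR]; push_cast [rep_cast]
    split_ifs with h <;> simp [ZMod.natCast_self]
  calc ((b - a).val : ℤ) = ((R : ZMod q)).val := by rw [h2]
    _ = R % q := ZMod.val_intCast R
    _ = R := Int.emod_eq_of_lt h0 h1
end aux

/-- The main diagonal of the transition matrix of a `q`-cycle `σ` with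
`des σ = d` contains exactly `d - 1` entries equal to `1` (and the rest `0`). -/
theorem transMatrix_diagonal_count (q d : ℕ) [NeZero q] (hq : 2 ≤ q)
    (σ : Equiv.Perm (ZMod q)) (hσ : IsQCycle q σ) (hd : desNum q σ = d) :
    (Finset.univ.filter fun i : ZMod q => transMatrix q σ i i = 1).card = d - 1 ∧
    (∀ i : ZMod q, transMatrix q σ i i = 1 ∨ transMatrix q σ i i = 0) := by
  haveI : Fact (1 < q) := ⟨hq⟩
  have hone : (1 : ZMod q) ≠ 0 := one_ne_zero
  have hfix : ∀ m : ZMod q, σ m ≠ m := by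
    intro m hm
    have hmm : ∀ n : ℕ, (σ ^ n) m = m := by
      intro n
      induction n with
      | zero => rfl
      | succ n ih => rw [pow_succ, Equiv.Perm.mul_apply, hm, ih]
    obtain ⟨n, hn⟩ := hσ m (m + 1)
    rw [hmm n] at hn
    exact hone (left_eq_add.mp hn)
  have hne : ∀ i : ZMod q, σ i ≠ σ (i + 1) := by
    intro i h
    exact hone (left_eq_add.mp (σ.injective h))
  have hA : ∀ i : ZMod q,
      (transMatrix q σ i i = 1 ↔ (i - σ i).val < (σ (i + 1) - σ i).val) := by
    intro i
    unfold transMatrix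
    rw [Matrix.of_apply]
    split_ifs with h <;> simp [h]
  constructor
  · -- count
    have hfilter : (Finset.univ.filter fun i : ZMod q => transMatrix q σ i i = 1)
        = Finset.univ.filter fun i : ZMod q => (i - σ i).val < (σ (i + 1) - σ i).val :=
      Finset.filter_congr (fun i _ => by rw [hA i])
    have key : ∀ i : ZMod q,
        (if (i - σ i).val < (σ (i + 1) - σ i).val then (1 : ℤ) else 0)
        = (if rep q (σ (i + 1)) < rep q (σ i) then (1 : ℤ) else 0)
          + (if rep q i < rep q (σ (i + 1)) then (1 : ℤ) else 0)
          - (if rep q i < rep q (σ i) then (1 : ℤ) else 0) := by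
      intro i
      have h1 := val_sub' q (σ i) i
      have h2 := val_sub' q (σ i) (σ (i + 1))
      have hb1 := rep_pos q i; have hb2 := rep_le q i
      have hb3 := rep_pos q (σ i); have hb4 := rep_le q (σ i)
      have hb5 := rep_pos q (σ (i + 1)); have hb6 := rep_le q (σ (i + 1))
      have hne' : rep q (σ i) ≠ rep q (σ (i + 1)) := fun h => hne i (rep_inj q h)
      split_ifs at h1 h2 ⊢ <;> omega
    have hrepsum : ∑ i : ZMod q, (if rep q i < rep q (σ (i + 1)) then (1 : ℤ) else 0)
        = (∑ i : ZMod q, if rep q i < rep q (σ i) then (1 : ℤ) else 0) - 1 := by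
      have rep_one : rep q (1 : ZMod q) = 1 := by
        unfold rep; rw [if_neg hone, ZMod.val_one]
      have e1 : ∑ i : ZMod q, (if rep q i < rep q (σ (i + 1)) then (1 : ℤ) else 0)
          = ∑ m : ZMod q, (if rep q (m - 1) < rep q (σ m) then (1 : ℤ) else 0) := by
        apply Fintype.sum_equiv (Equiv.addRight (1 : ZMod q))
        intro i
        simp [Equiv.coe_addRight, add_sub_cancel_right]
      have e2 : ∀ m : ZMod q, (if rep q (m - 1) < rep q (σ m) then (1 : ℤ) else 0)
          = (if rep q m < rep q (σ m) then (1 : ℤ) else 0) - (if m = 1 then (1 : ℤ) else 0) := by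
        intro m
        have hσm : rep q (σ m) ≠ rep q m := fun h => hfix m (rep_inj q h)
        have hb3 := rep_pos q (σ m); have hb4 := rep_le q (σ m)
        by_cases hm : m = 1
        · subst hm
          have h11 : (1 : ZMod q) - 1 = 0 := sub_self 1
          have hrep0 : rep q ((1 : ZMod q) - 1) = q := by rw [h11]; unfold rep; rw [if_pos rfl]
          rw [hrep0, rep_one, if_pos rfl]
          rw [rep_one] at hσm
          split_ifs <;> omega
        · have hm0 : m - 1 ≠ 0 := fun h => hm (by rwa [sub_eq_zero] at h)
          have hb1 := rep_pos q m
          have hval := val_sub' q 1 m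
          rw [rep_one] at hval
          have hrep1 : (rep q (m - 1) : ℤ) = (rep q m : ℤ) - 1 := by
            have : rep q (m - 1) = (m - 1).val := by unfold rep; rw [if_neg hm0]
            rw [this, hval]
            split_ifs <;> omega
          rw [if_neg hm]
          split_ifs <;> omega
      rw [e1, Finset.sum_congr rfl (fun m _ => e2 m), Finset.sum_sub_distrib,
        Finset.sum_ite_eq' Finset.univ (1 : ZMod q) (fun _ => (1 : ℤ)),
        if_pos (Finset.mem_univ _)]
    have hcardZ : (((Finset.univ.filter fun i : ZMod q => transMatrix q σ i i = 1).card : ℤ))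
        = (desNum q σ : ℤ) - 1 := by
      rw [hfilter, Finset.card_filter]
      push_cast
      rw [Finset.sum_congr rfl (fun i _ => key i), Finset.sum_sub_distrib,
        Finset.sum_add_distrib, hrepsum]
      have : (desNum q σ : ℤ)
          = ∑ i : ZMod q, (if rep q (σ (i + 1)) < rep q (σ i) then (1 : ℤ) else 0) := by
        unfold desNum; rw [Finset.card_filter]; push_cast; rfl
      rw [this]; ring
    omega
  · intro i
    unfold transMatrix
    rw [Matrix.of_apply]
    split_ifs <;> simp
end
end

section
/- Let σ ∈ 𝒞_q be a q-cycle with des(σ) = d ≥ 2 and let A be its transition matrix. Then every entry of the matrix power A^q is strictly positive. -/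
open scoped Classical

noncomputable section

namespace TransAux

variable {q : ℕ} [NeZero q]

lemma val_cases (a b : ZMod q) :
    (b - a).val + a.val = b.val ∨ (b - a).val + a.val = b.val + q := by
  have h1 : ((b - a) + a).val = ((b - a).val + a.val) % q := ZMod.val_add _ _
  rw [sub_add_cancel] at h1
  have h2 := ZMod.val_lt (b - a)
  have h3 := ZMod.val_lt a
  have h4 := ZMod.val_lt b
  rcases Nat.lt_or_ge ((b - a).val + a.val) q with h | h
  · left; rw [h1, Nat.mod_eq_of_lt h]
  · right
    have h5 : (b - a).val + a.val - q < q := by omega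
    rw [h1, Nat.mod_eq_sub_mod h, Nat.mod_eq_of_lt h5]
    omega

lemma key (a b : ZMod q) (hab : a ≠ b) :
    (b - a).val + rep q a = rep q b + (if rep q b < rep q a then q else 0) := by
  have hcase := val_cases a b
  have hv : (b - a).val ≠ 0 := by
    rw [Ne, ZMod.val_eq_zero, sub_eq_zero]
    exact fun h => hab h.symm
  have hvals : a.val ≠ b.val := fun h => hab (ZMod.val_injective q h)
  have ha0 : a = 0 ↔ a.val = 0 := (ZMod.val_eq_zero a).symm
  have hb0 : b = 0 ↔ b.val = 0 := (ZMod.val_eq_zero b).symm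
  have h2 := ZMod.val_lt (b - a)
  have h3 := ZMod.val_lt a
  have h4 := ZMod.val_lt b
  simp only [rep, ha0, hb0]
  rcases hcase with hc | hc <;> split_ifs <;> omega

lemma len_pos (hq : 2 ≤ q) (σ : Equiv.Perm (ZMod q)) (x : ZMod q) :
    1 ≤ (σ (x + 1) - σ x).val := by
  haveI : Fact (1 < q) := ⟨hq⟩
  have h1 : σ (x + 1) ≠ σ x := by
    intro h
    have := σ.injective h
    have h0 : (1 : ZMod q) = 0 := by
      have := add_eq_left.mp this
      exact this
    exact one_ne_zero h0
  have : (σ (x + 1) - σ x).val ≠ 0 := by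
    rw [Ne, ZMod.val_eq_zero, sub_eq_zero]
    exact h1
  omega

lemma sum_len (hq : 2 ≤ q) (σ : Equiv.Perm (ZMod q)) :
    ∑ x : ZMod q, (σ (x + 1) - σ x).val = q * desNum q σ := by
  haveI : Fact (1 < q) := ⟨hq⟩
  have hne : ∀ x : ZMod q, σ x ≠ σ (x + 1) := by
    intro x h
    have := σ.injective h
    exact one_ne_zero (add_eq_left.mp this.symm)
  have hsum : ∑ x : ZMod q, ((σ (x + 1) - σ x).val + rep q (σ x)) =
      ∑ x : ZMod q, (rep q (σ (x + 1)) +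
        (if rep q (σ (x + 1)) < rep q (σ x) then q else 0)) :=
    Finset.sum_congr rfl fun x _ => key (σ x) (σ (x + 1)) (hne x)
  rw [Finset.sum_add_distrib, Finset.sum_add_distrib] at hsum
  have hshift : ∑ x : ZMod q, rep q (σ (x + 1)) = ∑ x : ZMod q, rep q (σ x) :=
    Fintype.sum_equiv (Equiv.addRight 1) _ _ (fun x => rfl)
  have hite : ∑ x : ZMod q, (if rep q (σ (x + 1)) < rep q (σ x) then q else 0) =
      q * desNum q σ := by
    rw [Finset.sum_ite, Finset.sum_const, Finset.sum_const_zero, add_zero,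
      smul_eq_mul, desNum, mul_comm]
  rw [hshift, hite] at hsum
  omega

lemma no_small_period (σ : Equiv.Perm (ZMod q)) (hσ : IsQCycle q σ)
    (y : ZMod q) (p : ℕ) (hp0 : 0 < p) (hpq : p < q) (hfix : (σ ^ p) y = y) :
    False := by
  have hred : ∀ n, (σ ^ n) y = (σ ^ (n % p)) y := by
    intro n
    induction n using Nat.strong_induction_on with
    | _ n IH =>
      rcases Nat.lt_or_ge n p with h | h
      · rw [Nat.mod_eq_of_lt h]
      · have h1 : (σ ^ n) y = (σ ^ (n - p)) y := by
          conv_lhs => rw [show n = (n - p) + p from by omega]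
          rw [pow_add, Equiv.Perm.mul_apply, hfix]
        rw [h1, IH (n - p) (by omega), Nat.mod_eq_sub_mod h]
  have hsub : (Finset.univ : Finset (ZMod q)) ⊆
      (Finset.range p).image (fun r => (σ ^ r) y) := by
    intro j _
    obtain ⟨n, hn⟩ := hσ y j
    exact Finset.mem_image.mpr ⟨n % p, Finset.mem_range.mpr (Nat.mod_lt _ hp0),
      by rw [← hred n, hn]⟩
  have h1 := Finset.card_le_card hsub
  have h2 := Finset.card_image_le (s := Finset.range p) (f := fun r => (σ ^ r) y)
  rw [Finset.card_univ, ZMod.card, Finset.card_range] at *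
  omega

lemma orbit_injOn (σ : Equiv.Perm (ZMod q)) (hσ : IsQCycle q σ) (i : ZMod q) :
    ∀ a ∈ Finset.range q, ∀ b ∈ Finset.range q,
      (σ ^ a) i = (σ ^ b) i → a = b := by
  have haux : ∀ a b, a < b → b < q → (σ ^ a) i = (σ ^ b) i → False := by
    intro a b hab hbq heq
    apply no_small_period σ hσ ((σ ^ a) i) (b - a) (by omega) (by omega)
    rw [← Equiv.Perm.mul_apply, ← pow_add, show b - a + a = b from by omega]
    exact heq.symm
  intro a ha b hb heq
  simp only [Finset.mem_range] at ha hb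
  rcases lt_trichotomy a b with h | h | h
  · exact absurd heq (fun he => haux a b h hb he)
  · exact h
  · exact absurd heq.symm (fun he => haux b a h ha he)

lemma orbit_sum (σ : Equiv.Perm (ZMod q)) (hσ : IsQCycle q σ) (i : ZMod q)
    (g : ZMod q → ℕ) :
    ∑ x : ZMod q, g x = ∑ n ∈ Finset.range q, g ((σ ^ n) i) := by
  have hinj := orbit_injOn σ hσ i
  have himg : (Finset.range q).image (fun n => (σ ^ n) i) = Finset.univ := by
    apply Finset.eq_univ_of_card
    rw [Finset.card_image_of_injOn (fun a ha b hb h => hinj a ha b hb h),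
      Finset.card_range]
    exact (ZMod.card q).symm
  rw [← himg, Finset.sum_image hinj]

lemma desc (hq : 2 ≤ q) (σ : Equiv.Perm (ZMod q)) :
    ∀ M : ℕ, 1 ≤ M → ∀ b j : ZMod q,
      (j - σ b).val < M + ((σ (b + 1) - σ b).val - 1) →
      ∃ s : ℕ, s < M ∧
        (j - σ (b + (s : ZMod q))).val <
          (σ (b + (s : ZMod q) + 1) - σ (b + (s : ZMod q))).val := by
  intro M
  induction M with
  | zero => intro h; omega
  | succ M IH =>
    intro _ b j hj
    by_cases hc : (j - σ b).val < (σ (b + 1) - σ b).val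
    · exact ⟨0, Nat.succ_pos M, by simpa using hc⟩
    · push_neg at hc
      have hlb := len_pos hq σ b
      have hlb1 := len_pos hq σ (b + 1)
      have hval : (j - σ (b + 1)).val = (j - σ b).val - (σ (b + 1) - σ b).val := by
        have h0 := val_cases (σ (b + 1) - σ b) (j - σ b)
        have heq : (j - σ b) - (σ (b + 1) - σ b) = j - σ (b + 1) := by ring
        rw [heq] at h0
        have h1 := ZMod.val_lt (j - σ (b + 1))
        have h2 := ZMod.val_lt (j - σ b)
        rcases h0 with h0 | h0 <;> omega
      have hM : 1 ≤ M := by omega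
      have hb1 : (j - σ (b + 1)).val < M + ((σ (b + 1 + 1) - σ (b + 1)).val - 1) := by
        omega
      obtain ⟨s, hs, hprop⟩ := IH hM (b + 1) j hb1
      refine ⟨s + 1, by omega, ?_⟩
      have hcast : b + ((s + 1 : ℕ) : ZMod q) = b + 1 + (s : ZMod q) := by
        push_cast; ring
      rw [hcast]
      exact hprop

lemma entry (σ : Equiv.Perm (ZMod q)) (i j : ZMod q) :
    transMatrix q σ i j =
      if (j - σ i).val < (σ (i + 1) - σ i).val then (1 : ℝ) else 0 := rfl

lemma entry_nonneg (σ : Equiv.Perm (ZMod q)) (i j : ZMod q) :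
    0 ≤ transMatrix q σ i j := by
  rw [entry]; split <;> norm_num

lemma pow_entry_nonneg (σ : Equiv.Perm (ZMod q)) :
    ∀ n (i j : ZMod q), 0 ≤ (transMatrix q σ ^ n) i j := by
  intro n
  induction n with
  | zero =>
    intro i j
    rw [pow_zero, Matrix.one_apply]
    split <;> norm_num
  | succ n IH =>
    intro i j
    rw [pow_succ, Matrix.mul_apply]
    exact Finset.sum_nonneg fun k _ => mul_nonneg (IH i k) (entry_nonneg σ k j)

lemma main_step (hq : 2 ≤ q) (σ : Equiv.Perm (ZMod q)) :
    ∀ t (i j : ZMod q),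
      (j - (σ ^ (t + 1)) i).val < (σ (i + 1) - σ i).val +
        ∑ n ∈ Finset.Icc 1 t, ((σ ((σ ^ n) i + 1) - σ ((σ ^ n) i)).val - 1) →
      0 < (transMatrix q σ ^ (t + 1)) i j := by
  intro t
  induction t with
  | zero =>
    intro i j hj
    rw [show Finset.Icc 1 0 = ∅ from rfl, Finset.sum_empty, add_zero, pow_one] at hj
    rw [pow_one, entry, if_pos hj]
    norm_num
  | succ t IH =>
    intro i j hj
    rw [Finset.sum_Icc_succ_top (by omega : 1 ≤ t + 1), ← add_assoc] at hj
    have hσb : (σ ^ (t + 1 + 1)) i = σ ((σ ^ (t + 1)) i) := by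
      rw [pow_succ', Equiv.Perm.mul_apply]
    rw [hσb] at hj
    have hM1 : 1 ≤ (σ (i + 1) - σ i).val +
        ∑ n ∈ Finset.Icc 1 t, ((σ ((σ ^ n) i + 1) - σ ((σ ^ n) i)).val - 1) :=
      le_trans (len_pos hq σ i) (Nat.le_add_right _ _)
    obtain ⟨s, hs, hprop⟩ := desc hq σ _ hM1 ((σ ^ (t + 1)) i) j hj
    have hk : 0 < (transMatrix q σ ^ (t + 1)) i ((σ ^ (t + 1)) i + (s : ZMod q)) := by
      apply IH
      have h1 : (σ ^ (t + 1)) i + (s : ZMod q) - (σ ^ (t + 1)) i = (s : ZMod q) := by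
        ring
      rw [h1, ZMod.val_natCast]
      exact lt_of_le_of_lt (Nat.mod_le s q) hs
    have hA : 0 < transMatrix q σ ((σ ^ (t + 1)) i + (s : ZMod q)) j := by
      rw [entry, if_pos hprop]; norm_num
    rw [pow_succ, Matrix.mul_apply]
    exact Finset.sum_pos'
      (fun k _ => mul_nonneg (pow_entry_nonneg σ (t + 1) i k) (entry_nonneg σ k j))
      ⟨(σ ^ (t + 1)) i + (s : ZMod q), Finset.mem_univ _, mul_pos hk hA⟩

end TransAux


/-- If `σ` is a `q`-cycle with `des σ = d ≥ 2`, then every entry of the `q`-th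
power of its transition matrix is strictly positive. -/
theorem transMatrix_pow_q_pos (q d : ℕ) [NeZero q] (hq : 2 ≤ q)
    (σ : Equiv.Perm (ZMod q)) (hσ : IsQCycle q σ) (hd : desNum q σ = d)
    (hd2 : 2 ≤ d) :
    ∀ i j : ZMod q, 0 < (transMatrix q σ ^ q) i j := by
  intro i j
  have hsum := TransAux.sum_len hq σ
  rw [hd] at hsum
  set ℓ : ZMod q → ℕ := fun x => (σ (x + 1) - σ x).val with hℓ
  have hsum' : ∑ x : ZMod q, ℓ x = q * d := hsum
  have hl : ∀ x, 1 ≤ ℓ x := TransAux.len_pos hq σ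
  have horb : ∑ x : ZMod q, (ℓ x - 1) = ∑ n ∈ Finset.range q, (ℓ ((σ ^ n) i) - 1) :=
    TransAux.orbit_sum σ hσ i fun x => ℓ x - 1
  have hcard : ∑ _x : ZMod q, (1 : ℕ) = q := by
    rw [Finset.sum_const, smul_eq_mul, mul_one, Finset.card_univ, ZMod.card]
  have hsum1 : ∑ x : ZMod q, (ℓ x - 1) + ∑ _x : ZMod q, (1 : ℕ) =
      ∑ x : ZMod q, ℓ x := by
    rw [← Finset.sum_add_distrib]
    exact Finset.sum_congr rfl fun x _ => by have := hl x; omega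
  have hrange : Finset.range q = insert 0 (Finset.Icc 1 (q - 1)) := by
    ext n
    simp only [Finset.mem_range, Finset.mem_insert, Finset.mem_Icc]
    omega
  have h0 : (0 : ℕ) ∉ Finset.Icc 1 (q - 1) := by simp
  have hsplit : ∑ n ∈ Finset.range q, (ℓ ((σ ^ n) i) - 1) =
      (ℓ i - 1) + ∑ n ∈ Finset.Icc 1 (q - 1), (ℓ ((σ ^ n) i) - 1) := by
    rw [hrange, Finset.sum_insert h0, pow_zero]
    rfl
  have h2q : q + q ≤ q * d := by
    calc q + q = q * 2 := by ring
    _ ≤ q * d := Nat.mul_le_mul_left q hd2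
  have h2q' : q + q ≤ ∑ x : ZMod q, ℓ x := le_trans h2q (le_of_eq hsum'.symm)
  have hS : q ≤ ∑ x : ZMod q, (ℓ x - 1) := by omega
  have hq1 : q - 1 + 1 = q := by omega
  have hcond : (j - (σ ^ (q - 1 + 1)) i).val <
      ℓ i + ∑ n ∈ Finset.Icc 1 (q - 1), (ℓ ((σ ^ n) i) - 1) := by
    have hv := ZMod.val_lt (j - (σ ^ (q - 1 + 1)) i)
    have hli := hl i
    omega
  have hmain := TransAux.main_step hq σ (q - 1) i j hcond
  rwa [hq1] at hmain
end
end

section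
/- Let σ ∈ 𝒞_q be a q-cycle with des(σ) = d ≥ 2 and transition matrix A. Then there is a unique probability vector ℓ ∈ ℝ^q with Aℓ = dℓ; moreover ℓ has strictly positive components and satisfies ℓ = lim_{n→∞} (1/dⁿ) Aⁿ v for every probability vector v ∈ ℝ^q. -/
open scoped Classical

noncomputable section

/-!
Every point of `ℤ/qℤ` lies in exactly `d` of the arcs `[σ k, σ (k + 1))`: the closed walk
`σ 0 → σ 1 → ⋯ → σ 0` passes over `j + 1` as often as over `j`, and over `0 ≡ q` once per descent.
So every column of `A` sums to `d` and `B = A / d` is column stochastic. `B` is primitive: row `i`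
of `Aⁿ` is positive on an interval starting at `σⁿ i`, whose length never decreases and grows
whenever `σⁿ i` starts an arc of length `≥ 2`; such an arc exists since `d ≥ 2`, and the `q`-cycle
`σ` keeps returning to it.

For a primitive column-stochastic `P`, the power `P ^ M > 0` contracts the `ℓ¹` norm of sum-zero
vectors by a factor `< 1`, so `Pⁿ w → 0` for every such `w`. This gives uniqueness of the
stationary probability vector and convergence of `Pⁿ v` to it; existence comes from a kernel
vector of `P - 1`, normalised to sum one.
-/

open Filter Topology Finset Matrix

namespace Matrix

variable {n : Type*} [Fintype n]

lemma norm_le_sum_abs (v : n → ℝ) : ‖v‖ ≤ ∑ i, |v i| :=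
  (pi_norm_le_iff_of_nonneg (sum_nonneg fun _ _ => abs_nonneg _)).2 fun i =>
    (Real.norm_eq_abs _).trans_le (single_le_sum (fun j _ => abs_nonneg (v j)) (mem_univ i))

lemma sum_abs_mulVec_le {Q : Matrix n n ℝ} (hQ : ∀ i j, 0 ≤ Q i j) {s : ℝ}
    (hs : ∀ j, ∑ i, Q i j = s) (v : n → ℝ) : ∑ i, |(Q *ᵥ v) i| ≤ s * ∑ i, |v i| :=
  calc ∑ i, |(Q *ᵥ v) i| ≤ ∑ i, ∑ j, Q i j * |v j| := by
        refine sum_le_sum fun i _ => (abs_sum_le_sum_abs _ _).trans_eq ?_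
        simp only [abs_mul, abs_of_nonneg (hQ _ _)]
    _ = s * ∑ i, |v i| := by
        rw [sum_comm, mul_sum]
        simp only [← sum_mul, hs]

variable [DecidableEq n]

lemma IsPrimitive.smul {P : Matrix n n ℝ} (hP : P.IsPrimitive) {c : ℝ} (hc : 0 < c) :
    (c • P).IsPrimitive := by
  obtain ⟨k, hk, hpos⟩ := hP.exists_pos_pow
  refine ⟨fun i j => smul_nonneg hc.le (hP.nonneg i j), k, hk, fun i j => ?_⟩
  rw [smul_pow, smul_apply, smul_eq_mul]
  exact mul_pos (pow_pos hc k) (hpos i j)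

lemma pow_succ_apply_pos {P : Matrix n n ℝ} (hP : ∀ i j, 0 ≤ P i j) {m : ℕ} {i k j : n}
    (hik : 0 < (P ^ m) i k) (hkj : 0 < P k j) : 0 < (P ^ (m + 1)) i j := by
  rw [pow_succ, mul_apply]
  exact lt_of_lt_of_le (mul_pos hik hkj) <| single_le_sum
    (f := fun l => (P ^ m) i l * P l j)
    (fun l _ => mul_nonneg (pow_apply_nonneg hP m i l) (hP l j)) (mem_univ k)

/-- A positive row of `Pᵐ` stays positive in all higher powers, as `P` has no zero column. -/
lemma isPrimitive_of_forall_exists_pow_row_pos {P : Matrix n n ℝ} (hP : ∀ i j, 0 ≤ P i j)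
    (hcol : ∀ j, ∃ k, 0 < P k j) (hrow : ∀ i, ∃ m, ∀ j, 0 < (P ^ m) i j) : P.IsPrimitive := by
  choose m hm using hrow
  have hpersist : ∀ i c j, 0 < (P ^ (m i + c)) i j := by
    intro i c
    induction c with
    | zero => exact hm i
    | succ c ih =>
      intro j
      obtain ⟨k, hk⟩ := hcol j
      exact pow_succ_apply_pos hP (ih k) hk
  refine ⟨hP, univ.sup m + 1, Nat.succ_pos _, fun i j => ?_⟩
  obtain ⟨c, hc⟩ : ∃ c, univ.sup m + 1 = m i + c :=
    Nat.exists_eq_add_of_le (Nat.le_succ_of_le (le_sup (f := m) (mem_univ i)))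
  rw [hc]
  exact hpersist i c j

/-- On vectors of sum zero, subtracting `ε` from every entry of `P` does not change `P *ᵥ w`,
and the resulting matrix has column sums `1 - |n| ε`. -/
lemma sum_abs_mulVec_le_of_sum_eq_zero {P : Matrix n n ℝ} (hP : P ∈ colStochastic ℝ n) {ε : ℝ}
    (hε : ∀ i j, ε ≤ P i j) {w : n → ℝ} (hw : ∑ i, w i = 0) :
    ∑ i, |(P *ᵥ w) i| ≤ (1 - Fintype.card n * ε) * ∑ i, |w i| := by
  set Q : Matrix n n ℝ := P - of fun _ _ => ε
  have hQw : Q *ᵥ w = P *ᵥ w := by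
    rw [sub_mulVec, sub_eq_self]
    ext i
    simp [mulVec, dotProduct, ← mul_sum, hw]
  rw [← hQw]
  refine sum_abs_mulVec_le (fun i j => sub_nonneg.2 (hε i j)) (fun j => ?_) w
  simp [sum_col_of_mem_colStochastic hP]

lemma sum_abs_pow_mulVec_le {P : Matrix n n ℝ} (hP : P ∈ colStochastic ℝ n) {M : ℕ} {ε : ℝ}
    (hε : ∀ i j, ε ≤ (P ^ M) i j) (hc : 0 ≤ 1 - Fintype.card n * ε) {w : n → ℝ}
    (hw : ∑ i, w i = 0) (k : ℕ) :
    ∑ i, |(P ^ k *ᵥ w) i| ≤ (1 - Fintype.card n * ε) ^ (k / M) * ∑ i, |w i| := by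
  have hPM : P ^ M ∈ colStochastic ℝ n := pow_mem hP M
  have hblock : ∀ m : ℕ, ∑ i, |((P ^ M) ^ m *ᵥ w) i| ≤
      (1 - Fintype.card n * ε) ^ m * ∑ i, |w i| := by
    intro m
    induction m with
    | zero => simp
    | succ m ih =>
      rw [pow_succ', pow_succ', ← mulVec_mulVec, mul_assoc]
      refine (sum_abs_mulVec_le_of_sum_eq_zero hPM hε ?_).trans
        (mul_le_mul_of_nonneg_left ih hc)
      rw [sum_mulVec_of_mem_colStochastic (pow_mem hPM m), hw]
  have hk : P ^ k = P ^ (k % M) * (P ^ M) ^ (k / M) := by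
    rw [← pow_mul, ← pow_add, Nat.mod_add_div]
  rw [hk, ← mulVec_mulVec]
  refine (sum_abs_mulVec_le (fun i j => (pow_mem hP _).1 i j)
    (sum_col_of_mem_colStochastic (pow_mem hP _)) _).trans ?_
  rw [one_mul]
  exact hblock _

lemma tendsto_pow_mulVec_of_sum_eq_zero [Nonempty n] {P : Matrix n n ℝ}
    (hP : P ∈ colStochastic ℝ n) (hprim : P.IsPrimitive) {w : n → ℝ} (hw : ∑ i, w i = 0) :
    Tendsto (fun k => P ^ k *ᵥ w) atTop (𝓝 0) := by
  obtain ⟨M, hM, hpos⟩ := hprim.exists_pos_pow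
  obtain ⟨p, hp⟩ := Finite.exists_min fun p : n × n => (P ^ M) p.1 p.2
  set ε := (P ^ M) p.1 p.2
  have hε : ∀ i j, ε ≤ (P ^ M) i j := fun i j => hp (i, j)
  set c := 1 - Fintype.card n * ε
  have hc0 : 0 ≤ c := by
    have h := sum_le_sum fun i (_ : i ∈ univ) => hε i p.2
    rw [sum_col_of_mem_colStochastic (pow_mem hP M), sum_const, card_univ, nsmul_eq_mul] at h
    linarith
  have hc1 : c < 1 := by
    have : 0 < (Fintype.card n : ℝ) * ε := mul_pos (by exact_mod_cast Fintype.card_pos) (hpos _ _)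
    linarith
  refine squeeze_zero_norm (fun k => (norm_le_sum_abs _).trans
    (sum_abs_pow_mulVec_le hP hε hc0 hw k)) ?_
  simpa using ((tendsto_pow_atTop_nhds_zero_of_lt_one hc0 hc1).comp
    (Nat.tendsto_div_const_atTop hM.ne')).mul_const (∑ i, |w i|)

lemma pow_mulVec_eq_self {P : Matrix n n ℝ} {v : n → ℝ} (h : P *ᵥ v = v) (k : ℕ) :
    P ^ k *ᵥ v = v := by
  induction k with
  | zero => exact one_mulVec v
  | succ k ih => rw [pow_succ, ← mulVec_mulVec, h, ih]

lemma IsPrimitive.pos_of_mulVec_eq_self {P : Matrix n n ℝ} (hprim : P.IsPrimitive) {ℓ : n → ℝ}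
    (hℓ : ∀ i, 0 ≤ ℓ i) (hℓ0 : ℓ ≠ 0) (hfix : P *ᵥ ℓ = ℓ) (i : n) : 0 < ℓ i := by
  obtain ⟨M, -, hpos⟩ := hprim.exists_pos_pow
  obtain ⟨j, hj⟩ : ∃ j, 0 < ℓ j := by
    by_contra! h
    exact hℓ0 (funext fun j => le_antisymm (h j) (hℓ j))
  rw [← pow_mulVec_eq_self hfix M]
  exact sum_pos' (fun l _ => mul_nonneg (hpos i l).le (hℓ l))
    ⟨j, mem_univ j, mul_pos (hpos i j) hj⟩

variable [Nonempty n] {P : Matrix n n ℝ}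

lemma eq_zero_of_mulVec_eq_self_of_sum_eq_zero (hP : P ∈ colStochastic ℝ n)
    (hprim : P.IsPrimitive) {w : n → ℝ} (hfix : P *ᵥ w = w) (hw : ∑ i, w i = 0) : w = 0 := by
  have h := tendsto_pow_mulVec_of_sum_eq_zero hP hprim hw
  simp only [pow_mulVec_eq_self hfix] at h
  exact tendsto_nhds_unique tendsto_const_nhds h

lemma eq_of_mulVec_eq_self (hP : P ∈ colStochastic ℝ n) (hprim : P.IsPrimitive) {ℓ ℓ' : n → ℝ}
    (hfix : P *ᵥ ℓ = ℓ) (hfix' : P *ᵥ ℓ' = ℓ') (hsum : ∑ i, ℓ i = ∑ i, ℓ' i) : ℓ = ℓ' :=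
  sub_eq_zero.1 <| eq_zero_of_mulVec_eq_self_of_sum_eq_zero hP hprim
    (by rw [mulVec_sub, hfix, hfix']) (by simp [sum_sub_distrib, hsum])

lemma tendsto_pow_mulVec_of_mulVec_eq_self (hP : P ∈ colStochastic ℝ n)
    (hprim : P.IsPrimitive) {ℓ v : n → ℝ} (hfix : P *ᵥ ℓ = ℓ) (hv : ∑ i, v i = ∑ i, ℓ i) :
    Tendsto (fun k => P ^ k *ᵥ v) atTop (𝓝 ℓ) := by
  have h := (tendsto_pow_mulVec_of_sum_eq_zero hP hprim (w := v - ℓ)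
    (by simp [sum_sub_distrib, hv])).add_const ℓ
  simpa [mulVec_sub, pow_mulVec_eq_self hfix] using h

lemma exists_mulVec_eq_self_ne_zero (hP : P ∈ colStochastic ℝ n) : ∃ w ≠ 0, P *ᵥ w = w := by
  have hdet : (P - 1).det = 0 := by
    refine exists_vecMul_eq_zero_iff.1 ⟨1, one_ne_zero, ?_⟩
    rw [vecMul_sub, one_vecMul_of_mem_colStochastic hP, vecMul_one, sub_self]
  obtain ⟨w, hw, hfix⟩ := exists_mulVec_eq_zero_iff.2 hdet
  exact ⟨w, hw, by rwa [sub_mulVec, one_mulVec, sub_eq_zero] at hfix⟩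

/-- `ℓ` is nonnegative as the limit of the probability vectors `P ^ k *ᵥ Pi.single j 1`. -/
lemma exists_stationary_probVec (hP : P ∈ colStochastic ℝ n) (hprim : P.IsPrimitive) :
    ∃ ℓ : n → ℝ, (∀ i, 0 ≤ ℓ i) ∧ ∑ i, ℓ i = 1 ∧ P *ᵥ ℓ = ℓ := by
  obtain ⟨w, hw, hfix⟩ := exists_mulVec_eq_self_ne_zero hP
  have hsum : ∑ i, w i ≠ 0 := fun h => hw (eq_zero_of_mulVec_eq_self_of_sum_eq_zero hP hprim hfix h)
  set ℓ := (∑ i, w i)⁻¹ • w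
  have hℓsum : ∑ i, ℓ i = 1 := by simp [ℓ, ← mul_sum, hsum]
  have hℓfix : P *ᵥ ℓ = ℓ := by rw [mulVec_smul, hfix]
  obtain ⟨j⟩ := ‹Nonempty n›
  have hlim := tendsto_pow_mulVec_of_mulVec_eq_self hP hprim hℓfix (v := Pi.single j 1)
    (by simp [hℓsum])
  refine ⟨ℓ, fun i => ge_of_tendsto ((continuous_apply i).tendsto ℓ |>.comp hlim)
    (Eventually.of_forall fun k => ?_), hℓsum, hℓfix⟩
  exact nonneg_mulVec_of_mem_colStochastic (pow_mem hP k) (fun l => by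
    simp only [Pi.single_apply]; split <;> norm_num) i

end Matrix

lemma sum_ite_perm_apply_eq {α : Type*} [Fintype α] [DecidableEq α] (e : Equiv.Perm α) (x : α) :
    ∑ k, (if e k = x then (1 : ℝ) else 0) = 1 :=
  (Equiv.sum_comp e fun y => if y = x then (1 : ℝ) else 0).trans (by simp)

section Rep

variable {q : ℕ} [NeZero q]

lemma natCast_rep (x : ZMod q) : ((rep q x : ℕ) : ZMod q) = x := by
  unfold rep
  split_ifs with hx
  · simp [hx]
  · exact ZMod.natCast_zmod_val x

lemma rep_mem_Icc (x : ZMod q) : rep q x ∈ Set.Icc 1 q := by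
  unfold rep
  split_ifs with hx
  · exact ⟨Nat.one_le_iff_ne_zero.2 (NeZero.ne q), le_rfl⟩
  · exact ⟨ZMod.val_pos.2 hx, (ZMod.val_lt x).le⟩

lemma rep_injective : Function.Injective (rep q) := fun x y h => by
  rw [← natCast_rep x, h, natCast_rep]

lemma val_sub_eq_rep (x y : ZMod q) :
    (x - y).val = if rep q y ≤ rep q x then rep q x - rep q y else q + rep q x - rep q y := by
  obtain ⟨hx1, hxq⟩ := rep_mem_Icc x
  obtain ⟨hy1, hyq⟩ := rep_mem_Icc y
  have hcast : ((if rep q y ≤ rep q x then rep q x - rep q y else q + rep q x - rep q y : ℕ) :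
      ZMod q) = x - y := by
    split_ifs with h
    · rw [Nat.cast_sub h, natCast_rep, natCast_rep]
    · rw [Nat.cast_sub (by omega), Nat.cast_add, ZMod.natCast_self, natCast_rep, natCast_rep,
        zero_add]
  rw [← hcast, ZMod.val_cast_of_lt]
  split_ifs <;> omega

/-- The cyclic interval `[a, b)` contains `0 ≡ q` exactly when it wraps around, i.e. when
`b < a` in `{1, …, q}`. -/
lemma val_neg_lt_val_sub_iff {a b : ZMod q} (hab : a ≠ b) :
    (0 - a).val < (b - a).val ↔ rep q b < rep q a := by
  have hne : rep q a ≠ rep q b := rep_injective.ne hab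
  have h0 : rep q 0 = q := if_pos rfl
  obtain ⟨ha1, haq⟩ := rep_mem_Icc a
  obtain ⟨hb1, hbq⟩ := rep_mem_Icc b
  rw [val_sub_eq_rep, val_sub_eq_rep, h0]
  split_ifs <;> omega

end Rep

section TransitionMatrix

variable {q : ℕ} [Fact (1 < q)]

lemma perm_add_one_ne (σ : Equiv.Perm (ZMod q)) (k : ZMod q) : σ k ≠ σ (k + 1) :=
  σ.injective.ne (succ_ne_self k).symm

/-- Moving from `j` to `j + 1` enters the cyclic interval `[a, b)` at `a` and leaves it at `b`. -/
lemma ite_val_sub_lt_add_one_sub_ite {a b : ZMod q} (hab : a ≠ b) (j : ZMod q) :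
    (if (j + 1 - a).val < (b - a).val then (1 : ℝ) else 0) -
        (if (j - a).val < (b - a).val then 1 else 0) =
      (if a = j + 1 then 1 else 0) - (if b = j + 1 then 1 else 0) := by
  set x := j - a
  have hx1 : j + 1 - a = x + 1 := by ring
  have ha : a = j + 1 ↔ (x + 1).val = 0 := by
    rw [ZMod.val_eq_zero, ← hx1, sub_eq_zero, eq_comm]
  have hb : b = j + 1 ↔ (x + 1).val = (b - a).val := by
    rw [(ZMod.val_injective q).eq_iff, ← hx1, sub_left_inj, eq_comm]
  have hL : (b - a).val ≠ 0 := by rwa [Ne, ZMod.val_eq_zero, sub_eq_zero, eq_comm]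
  have hLq := ZMod.val_lt (b - a)
  have hxq := ZMod.val_lt x
  have hsucc : x.val + 1 < q ∧ (x + 1).val = x.val + 1 ∨ x.val + 1 = q ∧ (x + 1).val = 0 := by
    rw [ZMod.val_add, ZMod.val_one]
    by_cases h : x.val + 1 < q
    · exact Or.inl ⟨h, Nat.mod_eq_of_lt h⟩
    · exact Or.inr ⟨by omega, by rw [show x.val + 1 = q by omega, Nat.mod_self]⟩
  simp only [hx1, ha, hb]
  split_ifs <;> norm_num <;> omega

variable {σ : Equiv.Perm (ZMod q)}

lemma sum_transMatrix_col_zero : ∑ k, transMatrix q σ k 0 = desNum q σ := by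
  simp only [transMatrix, Matrix.of_apply, val_neg_lt_val_sub_iff (perm_add_one_ne σ _)]
  rw [Finset.sum_boole, desNum]

lemma sum_transMatrix_col_add_one (j : ZMod q) :
    ∑ k, transMatrix q σ k (j + 1) = ∑ k, transMatrix q σ k j := by
  rw [← sub_eq_zero, ← Finset.sum_sub_distrib]
  simp only [transMatrix, Matrix.of_apply, ite_val_sub_lt_add_one_sub_ite (perm_add_one_ne σ _)]
  rw [Finset.sum_sub_distrib, sum_ite_perm_apply_eq,
    Fintype.sum_equiv (Equiv.addRight 1) (fun k => if σ (k + 1) = j + 1 then (1 : ℝ) else 0)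
      (fun k => if σ k = j + 1 then (1 : ℝ) else 0) fun _ => rfl, sum_ite_perm_apply_eq, sub_self]

lemma sum_transMatrix_col (j : ZMod q) : ∑ k, transMatrix q σ k j = desNum q σ := by
  rw [← ZMod.natCast_zmod_val j]
  induction j.val with
  | zero => rw [Nat.cast_zero, sum_transMatrix_col_zero]
  | succ m ih => rw [Nat.cast_succ, sum_transMatrix_col_add_one, ih]

/-- The length of the cyclic interval `[σ k, σ (k + 1))`, the support of row `k` of the
transition matrix. -/
def arcLen (σ : Equiv.Perm (ZMod q)) (k : ZMod q) : ℕ := (σ (k + 1) - σ k).val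

lemma one_le_arcLen (k : ZMod q) : 1 ≤ arcLen σ k :=
  ZMod.val_pos.2 (sub_ne_zero.2 (perm_add_one_ne σ k).symm)

lemma transMatrix_nonneg (i j : ZMod q) : 0 ≤ transMatrix q σ i j := by
  simp only [transMatrix, Matrix.of_apply]
  split_ifs <;> norm_num

lemma transMatrix_pos_iff {i j : ZMod q} :
    0 < transMatrix q σ i j ↔ (j - σ i).val < arcLen σ i := by
  simp only [transMatrix, arcLen, Matrix.of_apply]
  split_ifs with h <;> simp [h]

lemma perm_add_natCast (a : ZMod q) (t : ℕ) :
    σ (a + t) = σ a + ((∑ u ∈ Finset.range t, arcLen σ (a + u) : ℕ) : ZMod q) := by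
  induction t with
  | zero => simp
  | succ t ih =>
    rw [Nat.cast_succ, ← add_assoc, Finset.sum_range_succ, Nat.cast_add, ← add_assoc, ← ih,
      arcLen, ZMod.natCast_zmod_val]
    ring

/-- The arcs of `a, a + 1, …, a + m - 1` are consecutive, so together they cover the first
`∑ arcLen` points after `σ a`. -/
lemma exists_transMatrix_pos_of_lt_sum_arcLen {a : ZMod q} {m s : ℕ} (hsq : s < q)
    (hs : s < ∑ u ∈ Finset.range m, arcLen σ (a + u)) :
    ∃ t < m, 0 < transMatrix q σ (a + t) (σ a + s) := by
  induction m with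
  | zero => simp at hs
  | succ m ih =>
    by_cases hlt : s < ∑ u ∈ Finset.range m, arcLen σ (a + u)
    · obtain ⟨t, ht, hpos⟩ := ih hlt
      exact ⟨t, ht.trans (Nat.lt_succ_self m), hpos⟩
    · rw [Finset.sum_range_succ] at hs
      refine ⟨m, Nat.lt_succ_self m, transMatrix_pos_iff.2 ?_⟩
      rw [perm_add_natCast, show σ a + (s : ZMod q) - (σ a + _) =
        ((s - ∑ u ∈ Finset.range m, arcLen σ (a + u) : ℕ) : ZMod q) by
          rw [Nat.cast_sub (by omega)]; ring,
        ZMod.val_cast_of_lt (by omega)]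
      omega

lemma pow_transMatrix_pos_of_lt_sum_arcLen {n m s : ℕ} {i a : ZMod q}
    (hpos : ∀ t < m, 0 < (transMatrix q σ ^ n) i (a + t)) (hsq : s < q)
    (hs : s < ∑ u ∈ Finset.range m, arcLen σ (a + u)) :
    0 < (transMatrix q σ ^ (n + 1)) i (σ a + s) := by
  obtain ⟨t, ht, hA⟩ := exists_transMatrix_pos_of_lt_sum_arcLen hsq hs
  exact pow_succ_apply_pos transMatrix_nonneg (hpos t ht) hA

lemma le_sum_arcLen (a : ZMod q) (m : ℕ) : m ≤ ∑ u ∈ Finset.range m, arcLen σ (a + u) := by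
  simpa using Finset.card_nsmul_le_sum (Finset.range m) (fun u => arcLen σ (a + u)) 1
    fun u _ => one_le_arcLen _

lemma pow_transMatrix_pos_interval_add {n m : ℕ} {i : ZMod q} (hmq : m ≤ q)
    (hpos : ∀ t < m, 0 < (transMatrix q σ ^ n) i ((σ ^ n) i + (t : ZMod q))) (k : ℕ) :
    ∀ t < m, 0 < (transMatrix q σ ^ (n + k)) i ((σ ^ (n + k)) i + (t : ZMod q)) := by
  induction k with
  | zero => exact hpos
  | succ k ih =>
    intro t ht
    rw [← add_assoc, pow_succ' σ, Equiv.Perm.mul_apply]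
    exact pow_transMatrix_pos_of_lt_sum_arcLen ih (by omega)
      (ht.trans_le (le_sum_arcLen _ m))

lemma exists_two_le_arcLen (hd : 2 ≤ desNum q σ) : ∃ h, 2 ≤ arcLen σ h := by
  by_contra! hshort
  have hone : ∀ k, arcLen σ k = 1 := fun k =>
    le_antisymm (Nat.lt_succ_iff.1 (hshort k)) (one_le_arcLen k)
  have hcol := sum_transMatrix_col (σ := σ) 0
  simp only [transMatrix, Matrix.of_apply] at hcol
  simp only [show ∀ k, (σ (k + 1) - σ k).val = 1 from hone, Nat.lt_one_iff, ZMod.val_eq_zero,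
    zero_sub, neg_eq_zero, sum_ite_perm_apply_eq] at hcol
  exact (by omega : desNum q σ ≠ 1) (by exact_mod_cast hcol.symm)

lemma exists_pow_transMatrix_pos_interval (hσ : IsQCycle q σ) (hd : 2 ≤ desNum q σ)
    (i : ZMod q) {m : ℕ} (hm : 1 ≤ m) (hmq : m ≤ q) :
    ∃ n, ∀ t < m, 0 < (transMatrix q σ ^ n) i ((σ ^ n) i + (t : ZMod q)) := by
  induction m, hm using Nat.le_induction with
  | base => exact ⟨0, fun t ht => by simp [show t = 0 by omega]⟩
  | succ m hm ih =>
    obtain ⟨n, hn⟩ := ih (by omega)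
    obtain ⟨h, hh⟩ := exists_two_le_arcLen hd
    obtain ⟨k, hk⟩ := hσ ((σ ^ n) i) h
    have hnk : (σ ^ (n + k)) i = h := by rw [add_comm, pow_add, Equiv.Perm.mul_apply, hk]
    have hpos := pow_transMatrix_pos_interval_add (by omega) hn k
    rw [hnk] at hpos
    refine ⟨n + k + 1, fun t ht => ?_⟩
    rw [pow_succ' σ, Equiv.Perm.mul_apply, hnk]
    have hlong : m < ∑ u ∈ Finset.range m, arcLen σ (h + u) :=
      calc m = ∑ _u ∈ Finset.range m, 1 := by simp
        _ < _ := Finset.sum_lt_sum (fun u _ => one_le_arcLen _)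
          ⟨0, Finset.mem_range.2 hm, by simpa using Nat.succ_le_iff.1 hh⟩
    exact pow_transMatrix_pos_of_lt_sum_arcLen hpos (by omega) (by omega)

lemma isPrimitive_transMatrix (hσ : IsQCycle q σ) (hd : 2 ≤ desNum q σ) :
    (transMatrix q σ).IsPrimitive := by
  refine isPrimitive_of_forall_exists_pow_row_pos transMatrix_nonneg
    (fun j => ⟨σ.symm j, transMatrix_pos_iff.2 ?_⟩) (fun i => ?_)
  · simpa using Nat.succ_le_iff.1 (one_le_arcLen (σ.symm j))
  obtain ⟨n, hn⟩ :=
    exists_pow_transMatrix_pos_interval hσ hd i (Nat.one_le_of_lt (Fact.out : 1 < q)) le_rfl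
  refine ⟨n, fun j => ?_⟩
  simpa using hn (j - (σ ^ n) i).val (ZMod.val_lt _)

lemma inv_smul_transMatrix_mem_colStochastic (hd : desNum q σ ≠ 0) :
    (desNum q σ : ℝ)⁻¹ • transMatrix q σ ∈ colStochastic ℝ (ZMod q) := by
  refine mem_colStochastic_iff_sum.2
    ⟨fun i j => mul_nonneg (inv_nonneg.2 (Nat.cast_nonneg _)) (transMatrix_nonneg i j), fun j => ?_⟩
  simp only [Matrix.smul_apply, smul_eq_mul, ← Finset.mul_sum, sum_transMatrix_col]
  exact inv_mul_cancel₀ (by exact_mod_cast hd)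

end TransitionMatrix

lemma desNum_le (q : ℕ) [NeZero q] (σ : Equiv.Perm (ZMod q)) : desNum q σ ≤ q :=
  (Finset.card_filter_le _ _).trans (Finset.card_univ.trans (ZMod.card q)).le

theorem transMatrix_perron_frobenius_general (q d : ℕ) [NeZero q]
    (σ : Equiv.Perm (ZMod q)) (hσ : IsQCycle q σ) (hd : desNum q σ = d)
    (hd2 : 2 ≤ d) :
    (∃! ℓ : ZMod q → ℝ, IsProbVec q ℓ ∧ (transMatrix q σ).mulVec ℓ = (d : ℝ) • ℓ) ∧
    (∀ ℓ : ZMod q → ℝ, IsProbVec q ℓ → (transMatrix q σ).mulVec ℓ = (d : ℝ) • ℓ →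
      (∀ i, 0 < ℓ i) ∧
      ∀ v : ZMod q → ℝ, IsProbVec q v →
        Filter.Tendsto (fun n : ℕ => (1 / (d : ℝ) ^ n) • (transMatrix q σ ^ n).mulVec v)
          Filter.atTop (nhds ℓ)) := by
  subst hd
  have : Fact (1 < q) := ⟨by have := desNum_le q σ; omega⟩
  have hd0 : (0 : ℝ) < desNum q σ := by exact_mod_cast (by omega : 0 < desNum q σ)
  set A := transMatrix q σ
  set B := (desNum q σ : ℝ)⁻¹ • A
  have hB : B ∈ colStochastic ℝ (ZMod q) := inv_smul_transMatrix_mem_colStochastic (by omega)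
  have hBprim : B.IsPrimitive := (isPrimitive_transMatrix hσ hd2).smul (inv_pos.2 hd0)
  have hfix_iff : ∀ v, A *ᵥ v = (desNum q σ : ℝ) • v ↔ B *ᵥ v = v := fun v => by
    rw [smul_mulVec, inv_smul_eq_iff₀ hd0.ne', eq_comm]
  have hpow : ∀ n v, (1 / (desNum q σ : ℝ) ^ n) • (A ^ n *ᵥ v) = B ^ n *ᵥ v := fun n v => by
    rw [smul_pow, smul_mulVec, one_div, inv_pow]
  obtain ⟨ℓ, hℓ0, hℓ1, hℓfix⟩ := exists_stationary_probVec hB hBprim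
  have huniq : ∀ ℓ', IsProbVec q ℓ' → A *ᵥ ℓ' = (desNum q σ : ℝ) • ℓ' → ℓ' = ℓ :=
    fun ℓ' hℓ' hfix => eq_of_mulVec_eq_self hB hBprim ((hfix_iff ℓ').1 hfix) hℓfix
      (hℓ'.2.trans hℓ1.symm)
  refine ⟨⟨ℓ, ⟨⟨hℓ0, hℓ1⟩, (hfix_iff ℓ).2 hℓfix⟩, fun ℓ' h => huniq ℓ' h.1 h.2⟩,
    fun ℓ' hℓ' hfix => ?_⟩
  obtain rfl := huniq ℓ' hℓ' hfix
  refine ⟨hBprim.pos_of_mulVec_eq_self hℓ0 (fun h => by simp [h] at hℓ1) hℓfix, fun v hv => ?_⟩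
  simpa only [hpow] using
    tendsto_pow_mulVec_of_mulVec_eq_self hB hBprim hℓfix (hv.2.trans hℓ1.symm)

/-- Perron–Frobenius for the transition matrix `A` of a `q`-cycle `σ` with
`des σ = d ≥ 2`: there is a unique probability vector `ℓ` with `Aℓ = dℓ`; it has
strictly positive components and `ℓ = lim (1/dⁿ) Aⁿ v` for every probability
vector `v`. -/
theorem transMatrix_perron_frobenius (q d : ℕ) [NeZero q] (hq : 2 ≤ q)
    (σ : Equiv.Perm (ZMod q)) (hσ : IsQCycle q σ) (hd : desNum q σ = d)
    (hd2 : 2 ≤ d) :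
    (∃! ℓ : ZMod q → ℝ, IsProbVec q ℓ ∧ (transMatrix q σ).mulVec ℓ = (d : ℝ) • ℓ) ∧
    (∀ ℓ : ZMod q → ℝ, IsProbVec q ℓ → (transMatrix q σ).mulVec ℓ = (d : ℝ) • ℓ →
      (∀ i, 0 < ℓ i) ∧
      ∀ v : ZMod q → ℝ, IsProbVec q v →
        Filter.Tendsto (fun n : ℕ => (1 / (d : ℝ) ^ n) • (transMatrix q σ ^ n).mulVec v)
          Filter.atTop (nhds ℓ)) :=
  transMatrix_perron_frobenius_general q d σ hσ hd hd2
end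
end
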